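/- For every n ≥ 1, the mixed moment of the position and the number of nonzero steps of the ERWS is E[S_n·Σ_n] = ((2s-1)/b)·( Γ(n + a + b)/(Γ(n)·Γ(a + b)) − a·Γ(n + a)/(Γ(n)·Γ(a + 1)) ). -/

import Mathlib

open MeasureTheory Filter Real Topology

noncomputable section

/-- The elephant random walk with stops (ERWS): a sequence of steps `X n` (for `n ≥ 1`),
adapted to a filtration `F`, with values in `{-1, 0, 1}`, prescribed first-step law and
prescribed conditional first and second moments of the steps. -/
structure ERWS {Ω : Type*} [m0 : MeasurableSpace Ω] (μ : Measure Ω) (p q s : ℝ) where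
  X : ℕ → Ω → ℝ
  F : MeasureTheory.Filtration ℕ m0
  adapted : ∀ n, 1 ≤ n → StronglyMeasurable[F n] (X n)
  val_mem : ∀ n, 1 ≤ n → ∀ ω, X n ω = -1 ∨ X n ω = 0 ∨ X n ω = 1
  init_one : μ {ω | X 1 ω = 1} = ENNReal.ofReal s
  init_neg : μ {ω | X 1 ω = -1} = ENNReal.ofReal (1 - s)
  cond_one : ∀ n, 1 ≤ n →
    μ[X (n + 1)|F n] =ᵐ[μ] fun ω => (p - q) * (∑ k ∈ Finset.Icc 1 n, X k ω) / n
  cond_two : ∀ n, 1 ≤ n →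
    μ[fun ω => (X (n + 1) ω) ^ 2|F n] =ᵐ[μ]
      fun ω => (p + q) * (∑ k ∈ Finset.Icc 1 n, (X k ω) ^ 2) / n

namespace ERWS

variable {Ω : Type*} [m0 : MeasurableSpace Ω] {μ : Measure Ω} {p q s : ℝ}

/-- The position `S n = X 1 + ⋯ + X n` of the ERWS. -/
def S (e : ERWS μ p q s) (n : ℕ) (ω : Ω) : ℝ := ∑ k ∈ Finset.Icc 1 n, e.X k ω

/-- The number of nonzero steps `Σ n = X 1 ² + ⋯ + X n ²` of the ERWS. -/
def Sig (e : ERWS μ p q s) (n : ℕ) (ω : Ω) : ℝ := ∑ k ∈ Finset.Icc 1 n, (e.X k ω) ^ 2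

end ERWS

/-!
Conditioning on `F n` gives `E[X_{n+1}] = (a/n) E[S_n]`, `E[S_n X_{n+1}²] = (b/n) E[S_n Σ_n]` and
`E[Σ_n X_{n+1}] = (a/n) E[S_n Σ_n]`. Since `X³ = X`, the mean `m_n = E[S_n]` and the mixed moment
`M_n = E[S_n Σ_n]` satisfy `m_{n+1} = (1 + a/n) m_n` and
`M_{n+1} = (1 + (a+b)/n) M_n + (a/n) m_n`. The combination `b M_n + a m_n` therefore solves the
homogeneous recurrence with rate `a + b`, and `u_{n+1} = (1 + c/n) u_n` is solved by
`u_1 Γ(n+c) / (Γ(n) Γ(c+1))`; finally `m_1 = M_1 = E[X_1] = 2s - 1`.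
-/

open scoped ENNReal

/-- Equals `∏_{k=1}^{n-1} (1 + c/k)`, the solution of `u (n + 1) = (1 + c/n) u n`, `u 1 = 1`. -/
def gammaRatio (c : ℝ) (n : ℕ) : ℝ := Gamma (n + c) / (Gamma n * Gamma (c + 1))

section gammaRatio

variable {c : ℝ}

lemma gammaRatio_one (hc : -1 < c) : gammaRatio c 1 = 1 := by
  have : Gamma (c + 1) ≠ 0 := (Gamma_pos_of_pos (by linarith)).ne'
  rw [gammaRatio, Nat.cast_one, Gamma_one, one_mul, add_comm, div_self this]

lemma gammaRatio_succ (hc : -1 < c) {n : ℕ} (hn : 1 ≤ n) :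
    gammaRatio c (n + 1) = (1 + c / n) * gammaRatio c n := by
  have hn' : (1 : ℝ) ≤ n := by exact_mod_cast hn
  have hnc : (n : ℝ) + c ≠ 0 := by linarith
  have hn0 : (n : ℝ) ≠ 0 := by linarith
  have hΓ : Gamma n ≠ 0 := (Gamma_pos_of_pos (by linarith)).ne'
  rw [gammaRatio, gammaRatio, Nat.cast_succ, add_right_comm, Gamma_add_one hnc,
    Gamma_add_one hn0]
  field_simp

lemma eq_mul_gammaRatio_of_succ (hc : -1 < c) {u : ℕ → ℝ}
    (hu : ∀ n, 1 ≤ n → u (n + 1) = (1 + c / n) * u n) :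
    ∀ n, 1 ≤ n → u n = u 1 * gammaRatio c n := by
  intro n hn
  induction n, hn using Nat.le_induction with
  | base => rw [gammaRatio_one hc, mul_one]
  | succ n hn ih => rw [hu n hn, ih, gammaRatio_succ hc hn]; ring

lemma mul_gammaRatio (hc : 0 ≤ c) (n : ℕ) :
    c * gammaRatio c n = Gamma (n + c) / (Gamma n * Gamma c) := by
  rcases hc.eq_or_lt with rfl | hc
  · simp
  · rw [gammaRatio, Gamma_add_one hc.ne']
    field_simp [(Gamma_pos_of_pos hc).ne']

end gammaRatio

lemma integral_mul_eq_of_condExp_eq {Ω : Type*} {m m0 : MeasurableSpace Ω} {μ : Measure Ω}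
    (hm : m ≤ m0) [SigmaFinite (μ.trim hm)] {f g h : Ω → ℝ} (hf : StronglyMeasurable[m] f)
    (hfg : Integrable (f * g) μ) (hg : Integrable g μ) (hgh : μ[g|m] =ᵐ[μ] h) :
    ∫ ω, f ω * g ω ∂μ = ∫ ω, f ω * h ω ∂μ :=
  calc ∫ ω, f ω * g ω ∂μ = ∫ ω, (μ[f * g|m]) ω ∂μ := (integral_condExp hm).symm
    _ = ∫ ω, f ω * h ω ∂μ := integral_congr_ae <|
      (condExp_mul_of_stronglyMeasurable_left hf hfg hg).trans (hgh.mono fun ω hω => by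
        simp only [Pi.mul_apply, hω])

namespace ERWS

variable {Ω : Type*} [m0 : MeasurableSpace Ω] {μ : Measure Ω} {p q s : ℝ} (e : ERWS μ p q s)

lemma X_pow_three {n : ℕ} (hn : 1 ≤ n) (ω : Ω) : e.X n ω ^ 3 = e.X n ω := by
  rcases e.val_mem n hn ω with h | h | h <;> norm_num [h]

lemma S_succ (n : ℕ) : e.S (n + 1) = e.S n + e.X (n + 1) := by
  ext ω; exact Finset.sum_Icc_succ_top (Nat.le_add_left 1 n) _

lemma Sig_succ (n : ℕ) : e.Sig (n + 1) = e.Sig n + fun ω => e.X (n + 1) ω ^ 2 := by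
  ext ω; exact Finset.sum_Icc_succ_top (Nat.le_add_left 1 n) _

lemma stronglyMeasurable_S (n : ℕ) : StronglyMeasurable[e.F n] (e.S n) := by
  refine Finset.stronglyMeasurable_fun_sum _ fun k hk => ?_
  exact (e.adapted k (Finset.mem_Icc.mp hk).1).mono (e.F.mono (Finset.mem_Icc.mp hk).2)

lemma stronglyMeasurable_Sig (n : ℕ) : StronglyMeasurable[e.F n] (e.Sig n) := by
  refine Finset.stronglyMeasurable_fun_sum _ fun k hk => ?_
  exact ((e.adapted k (Finset.mem_Icc.mp hk).1).mono (e.F.mono (Finset.mem_Icc.mp hk).2)).pow 2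

lemma memLp_top_X {n : ℕ} (hn : 1 ≤ n) : MemLp (e.X n) ∞ μ := by
  refine memLp_top_of_bound ((e.adapted n hn).mono (e.F.le n)).aestronglyMeasurable 1
    (ae_of_all _ fun ω => ?_)
  rcases e.val_mem n hn ω with h | h | h <;> norm_num [h]

lemma memLp_top_S (n : ℕ) : MemLp (e.S n) ∞ μ :=
  memLp_finsetSum _ fun _ hk => e.memLp_top_X (Finset.mem_Icc.mp hk).1

lemma memLp_top_X_sq {n : ℕ} (hn : 1 ≤ n) : MemLp (fun ω => e.X n ω ^ 2) ∞ μ := by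
  simpa only [sq] using (e.memLp_top_X hn).mul' (e.memLp_top_X hn)

lemma memLp_top_Sig (n : ℕ) : MemLp (e.Sig n) ∞ μ :=
  memLp_finsetSum _ fun _ hk => e.memLp_top_X_sq (Finset.mem_Icc.mp hk).1

section moments

variable [IsFiniteMeasure μ]

lemma integrable_S (n : ℕ) : Integrable (e.S n) μ := (e.memLp_top_S n).integrable le_top

lemma integrable_X {n : ℕ} (hn : 1 ≤ n) : Integrable (e.X n) μ :=
  (e.memLp_top_X hn).integrable le_top

lemma integral_X_succ {n : ℕ} (hn : 1 ≤ n) :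
    ∫ ω, e.X (n + 1) ω ∂μ = (p - q) / n * ∫ ω, e.S n ω ∂μ :=
  calc ∫ ω, e.X (n + 1) ω ∂μ = ∫ ω, (μ[e.X (n + 1)|e.F n]) ω ∂μ :=
        (integral_condExp (e.F.le n)).symm
    _ = ∫ ω, (p - q) / n * e.S n ω ∂μ := integral_congr_ae <|
        (e.cond_one n hn).mono fun ω hω => by rw [hω]; unfold S; ring
    _ = (p - q) / n * ∫ ω, e.S n ω ∂μ := integral_const_mul _ _

lemma integral_S_mul_X_succ_sq {n : ℕ} (hn : 1 ≤ n) :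
    ∫ ω, e.S n ω * e.X (n + 1) ω ^ 2 ∂μ = (p + q) / n * ∫ ω, e.S n ω * e.Sig n ω ∂μ := by
  have hX := e.memLp_top_X_sq (Nat.le_add_left 1 n)
  rw [integral_mul_eq_of_condExp_eq (e.F.le n) (e.stronglyMeasurable_S n)
    ((hX.mul (e.memLp_top_S n)).integrable le_top) (hX.integrable le_top) (e.cond_two n hn),
    ← integral_const_mul]
  congr 1 with ω
  unfold Sig; ring

lemma integral_Sig_mul_X_succ {n : ℕ} (hn : 1 ≤ n) :
    ∫ ω, e.Sig n ω * e.X (n + 1) ω ∂μ = (p - q) / n * ∫ ω, e.S n ω * e.Sig n ω ∂μ := by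
  rw [integral_mul_eq_of_condExp_eq (e.F.le n) (e.stronglyMeasurable_Sig n)
    (((e.memLp_top_X (Nat.le_add_left 1 n)).mul (e.memLp_top_Sig n)).integrable le_top)
    (e.integrable_X (Nat.le_add_left 1 n)) (e.cond_one n hn), ← integral_const_mul]
  congr 1 with ω
  unfold S; ring

lemma integral_S_succ {n : ℕ} (hn : 1 ≤ n) :
    ∫ ω, e.S (n + 1) ω ∂μ = (1 + (p - q) / n) * ∫ ω, e.S n ω ∂μ := by
  rw [S_succ, integral_add' (e.integrable_S n) (e.integrable_X (Nat.le_add_left 1 n)),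
    e.integral_X_succ hn]
  ring

lemma integral_S_mul_Sig_succ {n : ℕ} (hn : 1 ≤ n) :
    ∫ ω, e.S (n + 1) ω * e.Sig (n + 1) ω ∂μ
      = (1 + ((p - q) + (p + q)) / n) * ∫ ω, e.S n ω * e.Sig n ω ∂μ
        + (p - q) / n * ∫ ω, e.S n ω ∂μ := by
  have hn1 := Nat.le_add_left 1 n
  have hexpand : (fun ω => e.S (n + 1) ω * e.Sig (n + 1) ω) = fun ω =>
      e.S n ω * e.Sig n ω + e.S n ω * e.X (n + 1) ω ^ 2 + e.Sig n ω * e.X (n + 1) ω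
        + e.X (n + 1) ω := by
    ext ω
    simp only [S_succ, Sig_succ, Pi.add_apply]
    linear_combination e.X_pow_three hn1 ω
  have hX := e.memLp_top_X hn1
  have hA := ((e.memLp_top_Sig n).mul' (e.memLp_top_S n)).integrable le_top
  have hB := ((e.memLp_top_X_sq hn1).mul' (e.memLp_top_S n)).integrable le_top
  have hC := (hX.mul' (e.memLp_top_Sig n)).integrable le_top
  rw [hexpand, integral_add ?_ (hX.integrable le_top), integral_add ?_ hC, integral_add hA hB,
    e.integral_S_mul_X_succ_sq hn, e.integral_Sig_mul_X_succ hn, e.integral_X_succ hn]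
  · ring
  · exact hA.add hB
  · exact (hA.add hB).add hC

lemma integral_S_mul_Sig_combination_succ {n : ℕ} (hn : 1 ≤ n) :
    (p + q) * ∫ ω, e.S (n + 1) ω * e.Sig (n + 1) ω ∂μ + (p - q) * ∫ ω, e.S (n + 1) ω ∂μ
      = (1 + ((p - q) + (p + q)) / n)
          * ((p + q) * ∫ ω, e.S n ω * e.Sig n ω ∂μ + (p - q) * ∫ ω, e.S n ω ∂μ) := by
  rw [e.integral_S_mul_Sig_succ hn, e.integral_S_succ hn]
  ring

end moments

section closedForms

variable [IsProbabilityMeasure μ]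

lemma integral_X_one (hs0 : 0 ≤ s) (hs1 : s ≤ 1) : ∫ ω, e.X 1 ω ∂μ = 2 * s - 1 := by
  have hX := (e.adapted 1 le_rfl).mono (e.F.le 1)
  have hA : MeasurableSet {ω | e.X 1 ω = 1} := hX.measurable (measurableSet_singleton 1)
  have hB : MeasurableSet {ω | e.X 1 ω = -1} := hX.measurable (measurableSet_singleton (-1))
  have hsplit : e.X 1 = {ω | e.X 1 ω = 1}.indicator 1 - {ω | e.X 1 ω = -1}.indicator 1 := by
    ext ω
    simp only [Pi.sub_apply, Set.indicator_apply, Pi.one_apply]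
    rcases e.val_mem 1 le_rfl ω with h | h | h <;> norm_num [h]
  rw [hsplit, integral_sub' ((integrable_const 1).indicator hA) ((integrable_const 1).indicator hB),
    integral_indicator_one hA, integral_indicator_one hB, measureReal_def, measureReal_def,
    e.init_one, e.init_neg, ENNReal.toReal_ofReal hs0, ENNReal.toReal_ofReal (by linarith)]
  ring

lemma integral_S_eq (hs0 : 0 ≤ s) (hs1 : s ≤ 1) (ha : -1 < p - q) {n : ℕ} (hn : 1 ≤ n) :
    ∫ ω, e.S n ω ∂μ = (2 * s - 1) * gammaRatio (p - q) n := by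
  have hS1 : e.S 1 = e.X 1 := by ext ω; simp [S]
  rw [eq_mul_gammaRatio_of_succ (u := fun n => ∫ ω, e.S n ω ∂μ) ha
    (fun n hn => e.integral_S_succ hn) n hn, hS1, e.integral_X_one hs0 hs1]

lemma integral_S_mul_Sig_eq (hs0 : 0 ≤ s) (hs1 : s ≤ 1) (ha : -1 < p - q)
    (hab : 0 ≤ (p - q) + (p + q)) (hb : p + q ≠ 0) {n : ℕ} (hn : 1 ≤ n) :
    ∫ ω, e.S n ω * e.Sig n ω ∂μ = (2 * s - 1) / (p + q)
      * ((p - q + (p + q)) * gammaRatio (p - q + (p + q)) n - (p - q) * gammaRatio (p - q) n) := by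
  have hSSig1 : (fun ω => e.S 1 ω * e.Sig 1 ω) = e.X 1 := by
    ext ω
    simp only [S, Sig, Finset.Icc_self, Finset.sum_singleton]
    linear_combination e.X_pow_three le_rfl ω
  have hw := eq_mul_gammaRatio_of_succ (by linarith) (u := fun n =>
    (p + q) * ∫ ω, e.S n ω * e.Sig n ω ∂μ + (p - q) * ∫ ω, e.S n ω ∂μ)
    (fun n hn => e.integral_S_mul_Sig_combination_succ hn) n hn
  rw [hSSig1, e.integral_S_eq hs0 hs1 ha hn, e.integral_S_eq hs0 hs1 ha le_rfl,
    e.integral_X_one hs0 hs1, gammaRatio_one ha] at hw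
  field_simp
  linear_combination hw

end closedForms

end ERWS

theorem erws_mixed_moment_general
    {Ω : Type*} [m0 : MeasurableSpace Ω] {μ : Measure Ω} [IsProbabilityMeasure μ]
    {p q r s : ℝ} (hp : 0 ≤ p) (hr0 : 0 < r) (hr1 : r < 1)
    (hpqr : p + q + r = 1) (hs0 : 0 ≤ s) (hs1 : s ≤ 1)
    (e : ERWS μ p q s) :
    ∀ n : ℕ, 1 ≤ n →
      ∫ ω, e.S n ω * e.Sig n ω ∂μ
        = ((2 * s - 1) / (p + q)) *
            (Real.Gamma (n + (p - q) + (p + q)) / (Real.Gamma n * Real.Gamma ((p - q) + (p + q)))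
              - (p - q) * Real.Gamma (n + (p - q))
                  / (Real.Gamma n * Real.Gamma ((p - q) + 1))) := by
  intro n hn
  have hab : 0 ≤ (p - q) + (p + q) := by linarith
  rw [e.integral_S_mul_Sig_eq hs0 hs1 (by linarith) hab (by linarith) hn, mul_gammaRatio hab,
    gammaRatio, mul_div_assoc, ← add_assoc (n : ℝ)]

/-- the mixed moment of the position and the number of nonzero steps is
`E[S_n Σ_n] = ((2s-1)/b) (Γ(n+a+b)/(Γ(n)Γ(a+b)) − a Γ(n+a)/(Γ(n)Γ(a+1)))`,
where `a = p - q` and `b = p + q`. -/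
theorem erws_mixed_moment
    {Ω : Type*} [m0 : MeasurableSpace Ω] {μ : Measure Ω} [IsProbabilityMeasure μ]
    {p q r s : ℝ} (hp : 0 ≤ p) (hq : 0 ≤ q) (hr0 : 0 < r) (hr1 : r < 1)
    (hpqr : p + q + r = 1) (hs0 : 0 ≤ s) (hs1 : s ≤ 1)
    (e : ERWS μ p q s) :
    ∀ n : ℕ, 1 ≤ n →
      ∫ ω, e.S n ω * e.Sig n ω ∂μ
        = ((2 * s - 1) / (p + q)) *
            (Real.Gamma (n + (p - q) + (p + q)) / (Real.Gamma n * Real.Gamma ((p - q) + (p + q)))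
              - (p - q) * Real.Gamma (n + (p - q))
                  / (Real.Gamma n * Real.Gamma ((p - q) + 1))) :=
  erws_mixed_moment_general (m0 := m0) hp hr0 hr1 hpqr hs0 hs1 e
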